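/- Let Θ be an n×m phase matrix with m ≥ n. Then rank_phase(Θ) < n if and only if there exist scalars d_1,…,d_n, each either 0 or of modulus 1, not all zero, such that for every column index j the family (d_1·Θ_{1j}, …, d_n·Θ_{nj}) is not colopsided, i.e., 0 lies in the relative interior of the convex hull (in ℝ² ≅ ℂ) of these n points. -/

import Mathlib

/-!
A matrix `M` has rank `< n` iff some `c ≠ 0` satisfies `∑ᵢ cᵢ Mᵢⱼ = 0` for every column `j`.
Writing `cᵢ = |cᵢ| dᵢ` and `Mᵢⱼ = |Mᵢⱼ| Θᵢⱼ`, this says that each column of `(dᵢ Θᵢⱼ)` has `0` as a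
combination with nonnegative weights, positive wherever `dᵢ ≠ 0`; conversely, such weights, chosen
independently for each column, are the moduli of a matrix with phases `Θ` killed by `d`.
Finally, a point lies in the relative interior of the convex hull of finitely many points
exactly when it is a combination of them with all weights positive.
-/

/-- The phase rank of a complex matrix `Θ`: the minimum rank over all complex matrices
with nonzero entries whose entrywise phases agree with `Θ`. -/
noncomputable def phaseRank {n m : ℕ} (Θ : Matrix (Fin n) (Fin m) ℂ) : ℕ :=
  sInf {r | ∃ M : Matrix (Fin n) (Fin m) ℂ,
    (∀ i j, M i j ≠ 0) ∧ (∀ i j, M i j / ((‖M i j‖ : ℝ) : ℂ) = Θ i j) ∧ M.rank = r}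

open Set Filter Topology
open scoped Matrix

theorem mem_intrinsicInterior_iff_eventually {𝕜 V P : Type*} [Ring 𝕜] [AddCommGroup V]
    [Module 𝕜 V] [TopologicalSpace P] [AddTorsor V P] {s : Set P} {x : P} :
    x ∈ intrinsicInterior 𝕜 s ↔ x ∈ affineSpan 𝕜 s ∧ ∀ᶠ y in 𝓝[affineSpan 𝕜 s] x, y ∈ s := by
  constructor
  · rintro ⟨⟨x, hx⟩, hint, rfl⟩
    exact ⟨hx, (eventually_nhds_subtype_iff _ _ _).1 (mem_interior_iff_mem_nhds.1 hint)⟩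
  · rintro ⟨hx, hev⟩
    exact ⟨⟨x, hx⟩, mem_interior_iff_mem_nhds.2 ((eventually_nhds_subtype_iff _ _ _).2 hev), rfl⟩

theorem Convex.combo_self_intrinsicInterior_mem_intrinsicInterior {𝕜 E : Type*} [Field 𝕜]
    [LinearOrder 𝕜] [IsStrictOrderedRing 𝕜] [AddCommGroup E] [Module 𝕜 E] [TopologicalSpace E]
    [IsTopologicalAddGroup E] [ContinuousConstSMul 𝕜 E] {s : Set E} (hs : Convex 𝕜 s) {x y : E}
    (hx : x ∈ s) (hy : y ∈ intrinsicInterior 𝕜 s) {a b : 𝕜} (ha : 0 ≤ a) (hb : 0 < b)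
    (hab : a + b = 1) : a • x + b • y ∈ intrinsicInterior 𝕜 s := by
  rw [mem_intrinsicInterior_iff_eventually] at hy ⊢
  obtain ⟨hyA, hys⟩ := hy
  set A := affineSpan 𝕜 s
  set z := a • x + b • y
  have hzA : z ∈ A := by
    convert AffineMap.lineMap_mem b (subset_affineSpan 𝕜 s hx) hyA using 1
    rw [AffineMap.lineMap_apply_module, ← hab, add_sub_cancel_right]
  -- `φ` inverts the homothety `v ↦ a • x + b • v`, which maps `s` into itself.
  set φ : E → E := fun w => b⁻¹ • (w - z) + y
  have hφ : Tendsto φ (𝓝[A] z) (𝓝[A] y) := by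
    refine tendsto_nhdsWithin_iff.2 ⟨?_, ?_⟩
    · have : Continuous φ := by fun_prop
      simpa [φ] using (this.tendsto z).mono_left nhdsWithin_le_nhds
    · filter_upwards [self_mem_nhdsWithin] with w hw
      exact A.smul_vsub_vadd_mem b⁻¹ hw hzA hyA
  refine ⟨hzA, ?_⟩
  filter_upwards [hφ.eventually hys] with w hw
  have hw_eq : w = a • x + b • φ w := by
    simp only [φ, z, smul_add, smul_smul, mul_inv_cancel₀ hb.ne', one_smul]
    abel
  rw [hw_eq]
  exact hs hx hw ha hb.le hab

theorem mem_convexHull_range_iff_exists_weights {R E ι : Type*} [Field R] [LinearOrder R]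
    [IsStrictOrderedRing R] [AddCommGroup E] [Module R E] [Fintype ι] {p : ι → E} {x : E} :
    x ∈ convexHull R (range p) ↔
      ∃ w : ι → R, (∀ i, 0 ≤ w i) ∧ ∑ i, w i = 1 ∧ ∑ i, w i • p i = x := by
  classical
  constructor
  · rw [convexHull_range_eq_exists_affineCombination]
    rintro ⟨s, w, hw0, hw1, rfl⟩
    refine ⟨fun i => if i ∈ s then w i else 0, fun i => ?_, ?_, ?_⟩
    · dsimp only
      split_ifs with hi
      exacts [hw0 i hi, le_rfl]
    · rw [Finset.sum_ite_mem, Finset.univ_inter, hw1]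
    · simp only [ite_smul, zero_smul]
      rw [Finset.sum_ite_mem, Finset.univ_inter,
        Finset.affineCombination_eq_linear_combination _ _ _ hw1]
  · rintro ⟨w, hw0, hw1, rfl⟩
    exact mem_convexHull_of_exists_fintype w p hw0 hw1 mem_range_self rfl

theorem exists_pos_weights_of_mem_intrinsicInterior_convexHull_range {E ι : Type*}
    [AddCommGroup E] [Module ℝ E] [TopologicalSpace E] [IsTopologicalAddGroup E]
    [ContinuousSMul ℝ E] [Fintype ι] {p : ι → E} {x : E}
    (hx : x ∈ intrinsicInterior ℝ (convexHull ℝ (range p))) :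
    ∃ w : ι → ℝ, (∀ i, 0 < w i) ∧ ∑ i, w i = 1 ∧ ∑ i, w i • p i = x := by
  set C := convexHull ℝ (range p)
  have hxC : x ∈ C := intrinsicInterior_subset hx
  have : Nonempty ι := range_nonempty_iff_nonempty.1 (convexHull_nonempty_iff.1 ⟨x, hxC⟩)
  obtain ⟨hxA, hxev⟩ := mem_intrinsicInterior_iff_eventually.1 hx
  set k : ℝ := (Fintype.card ι : ℝ)
  have hk : 0 < k := Nat.cast_pos.2 Fintype.card_pos
  have hsum_inv : ∑ _i : ι, k⁻¹ = 1 := by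
    rw [Finset.sum_const, Finset.card_univ, nsmul_eq_mul, mul_inv_cancel₀ hk.ne']
  set b := ∑ i, k⁻¹ • p i
  have hbA : b ∈ affineSpan ℝ C := subset_affineSpan ℝ C
    (mem_convexHull_range_iff_exists_weights.2 ⟨_, fun _ => by positivity, hsum_inv, rfl⟩)
  -- For small `t > 0`, `x + t • (x - b)` is still in `C`, and `x` is a combination of it and
  -- the centroid `b` with positive coefficients.
  have hpush : Tendsto (fun t : ℝ => t • (x - b) + x) (𝓝 0) (𝓝[affineSpan ℝ C] x) := by
    refine tendsto_nhdsWithin_iff.2 ⟨?_, Eventually.of_forall fun t =>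
      (affineSpan ℝ C).smul_vsub_vadd_mem t hxA hbA hxA⟩
    have : Continuous fun t : ℝ => t • (x - b) + x := by fun_prop
    simpa using this.tendsto 0
  obtain ⟨t, hyC, ht⟩ :=
    ((hpush.eventually hxev).filter_mono nhdsWithin_le_nhds |>.and self_mem_nhdsWithin).exists
      (f := 𝓝[>] (0 : ℝ))
  obtain ⟨u, hu0, hu1, hu⟩ := mem_convexHull_range_iff_exists_weights.1 hyC
  have ht1 : (1 + t) ≠ 0 := by positivity
  refine ⟨fun i => (u i + t * k⁻¹) / (1 + t),
    fun i => div_pos (add_pos_of_nonneg_of_pos (hu0 i) (by positivity)) (by positivity), ?_, ?_⟩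
  · rw [← Finset.sum_div, Finset.sum_add_distrib, hu1, ← Finset.mul_sum, hsum_inv, mul_one,
      div_self ht1]
  · calc ∑ i, ((u i + t * k⁻¹) / (1 + t)) • p i = (1 + t)⁻¹ • (∑ i, u i • p i + t • b) := by
          simp only [b, Finset.smul_sum, ← Finset.sum_add_distrib]
          refine Finset.sum_congr rfl fun i _ => ?_
          rw [div_eq_inv_mul, mul_smul, add_smul, mul_smul]
      _ = x := by
          rw [hu, show t • (x - b) + x + t • b = (1 + t) • x by module, inv_smul_smul₀ ht1]

theorem mem_intrinsicInterior_convexHull_range_of_pos_weights {E ι : Type*}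
    [NormedAddCommGroup E] [NormedSpace ℝ E] [FiniteDimensional ℝ E] [Fintype ι] {p : ι → E}
    {w : ι → ℝ} (hw0 : ∀ i, 0 < w i) (hw1 : ∑ i, w i = 1) :
    ∑ i, w i • p i ∈ intrinsicInterior ℝ (convexHull ℝ (range p)) := by
  set C := convexHull ℝ (range p)
  have : Nonempty ι := by
    by_contra h
    simp [not_nonempty_iff.1 h] at hw1
  obtain ⟨y, hy⟩ := Set.Nonempty.intrinsicInterior (convex_convexHull ℝ (range p))
    ((range_nonempty p).mono (subset_convexHull ℝ _))
  obtain ⟨μ, -, hμ1, hμ⟩ :=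
    mem_convexHull_range_iff_exists_weights.1 (intrinsicInterior_subset hy)
  -- Write `∑ w • p = (1 - t) • z + t • y` with `z ∈ C`: for small `t > 0` the weights
  -- `(w - t • μ) / (1 - t)` of `z` are still nonnegative.
  have hsmall : ∀ᶠ t in 𝓝 (0 : ℝ), t < 1 ∧ ∀ i, t * μ i < w i :=
    (eventually_lt_nhds one_pos).and <| eventually_all.2 fun i =>
      ((continuous_mul_const (μ i)).tendsto' 0 0 (zero_mul _)).eventually_lt_const (hw0 i)
  obtain ⟨t, ⟨ht1, htw⟩, ht0⟩ :=
    (hsmall.filter_mono nhdsWithin_le_nhds |>.and self_mem_nhdsWithin).exists (f := 𝓝[>] (0 : ℝ))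
  have h1t : 0 < 1 - t := sub_pos.2 ht1
  set v : ι → ℝ := fun i => (w i - t * μ i) / (1 - t)
  have hzC : ∑ i, v i • p i ∈ C := mem_convexHull_range_iff_exists_weights.2
    ⟨v, fun i => div_nonneg (sub_pos.2 (htw i)).le h1t.le, by
      rw [← Finset.sum_div, Finset.sum_sub_distrib, ← Finset.mul_sum, hw1, hμ1, mul_one,
        div_self h1t.ne'], rfl⟩
  have hcombo : (1 - t) • ∑ i, v i • p i + t • y = ∑ i, w i • p i := by
    have hv : (1 - t) • ∑ i, v i • p i = ∑ i, w i • p i - t • ∑ i, μ i • p i := by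
      rw [Finset.smul_sum, Finset.smul_sum, ← Finset.sum_sub_distrib]
      refine Finset.sum_congr rfl fun i _ => ?_
      rw [smul_smul, mul_div_cancel₀ _ h1t.ne', sub_smul, mul_smul]
    rw [hv, hμ, sub_add_cancel]
  rw [← hcombo]
  exact (convex_convexHull ℝ _).combo_self_intrinsicInterior_mem_intrinsicInterior hzC hy
    h1t.le ht0 (sub_add_cancel 1 t)

theorem zero_mem_intrinsicInterior_convexHull_range_iff {E ι : Type*}
    [NormedAddCommGroup E] [NormedSpace ℝ E] [FiniteDimensional ℝ E] [Fintype ι] [Nonempty ι]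
    {p : ι → E} :
    0 ∈ intrinsicInterior ℝ (convexHull ℝ (range p)) ↔
      ∃ w : ι → ℝ, (∀ i, 0 < w i) ∧ ∑ i, w i • p i = 0 := by
  constructor
  · intro h
    obtain ⟨w, hw0, -, hw⟩ := exists_pos_weights_of_mem_intrinsicInterior_convexHull_range h
    exact ⟨w, hw0, hw⟩
  · rintro ⟨w, hw0, hw⟩
    set S := ∑ i, w i
    have hS : 0 < S := Finset.sum_pos (fun i _ => hw0 i) Finset.univ_nonempty
    have h := mem_intrinsicInterior_convexHull_range_of_pos_weights (p := p)
      (w := fun i => w i / S) (fun i => div_pos (hw0 i) hS)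
      (by rw [← Finset.sum_div, div_self hS.ne'])
    simpa only [div_eq_inv_mul, mul_smul, ← Finset.smul_sum, hw, smul_zero] using h

theorem Matrix.rank_lt_card_height_iff_exists_vecMul_eq_zero {K m n : Type*} [Field K]
    [Fintype m] [Fintype n] {A : Matrix m n K} :
    A.rank < Fintype.card m ↔ ∃ c : m → K, c ≠ 0 ∧ c ᵥ* A = 0 := by
  have hindep : LinearIndependent K A.row ↔ A.rank = Fintype.card m := by
    rw [linearIndependent_iff_card_eq_finrank_span, A.rank_eq_finrank_span_row, Set.finrank,
      eq_comm]
  rw [A.rank_le_card_height.lt_iff_ne, Ne, ← hindep, Fintype.not_linearIndependent_iff]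
  simp only [Matrix.vecMul_eq_sum, Function.ne_iff]
  exact ⟨fun ⟨c, hc, i, hi⟩ => ⟨c, ⟨i, hi⟩, hc⟩, fun ⟨c, ⟨i, hi⟩, hc⟩ => ⟨c, hc, i, hi⟩⟩

theorem phaseRank_lt_iff {n m : ℕ} {Θ : Matrix (Fin n) (Fin m) ℂ} (hΘ : ∀ i j, ‖Θ i j‖ = 1)
    {k : ℕ} :
    phaseRank Θ < k ↔ ∃ M : Matrix (Fin n) (Fin m) ℂ,
      (∀ i j, M i j ≠ 0) ∧ (∀ i j, M i j / ((‖M i j‖ : ℝ) : ℂ) = Θ i j) ∧ M.rank < k := by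
  have hΘ0 : ∀ i j, Θ i j ≠ 0 := fun i j => norm_ne_zero_iff.1 (by rw [hΘ]; exact one_ne_zero)
  rw [phaseRank, csInf_lt_iff (OrderBot.bddBelow _) ?nonempty]
  · simp [and_assoc]
  case nonempty => exact ⟨_, Θ, hΘ0, fun i j => by rw [hΘ, Complex.ofReal_one, div_one], rfl⟩

theorem exists_scaling_of_vecMul_eq_zero {ι κ : Type*} [Fintype ι] {M Θ : Matrix ι κ ℂ}
    (hM0 : ∀ i j, M i j ≠ 0) (hMΘ : ∀ i j, M i j / ((‖M i j‖ : ℝ) : ℂ) = Θ i j) {c : ι → ℂ}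
    (hc : c ≠ 0) (hcM : c ᵥ* M = 0) :
    ∃ d : ι → ℂ, (∀ i, d i = 0 ∨ ‖d i‖ = 1) ∧ (∃ i, d i ≠ 0) ∧
      ∀ j, (0 : ℂ) ∈ intrinsicInterior ℝ (convexHull ℝ (range fun i => d i * Θ i j)) := by
  obtain ⟨i₀, hi₀⟩ := Function.ne_iff.1 hc
  have : Nonempty ι := ⟨i₀⟩
  refine ⟨fun i => c i / ((‖c i‖ : ℝ) : ℂ), fun i => ?_, ⟨i₀, div_ne_zero hi₀ (by simpa using hi₀)⟩,
    fun j => zero_mem_intrinsicInterior_convexHull_range_iff.2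
      ⟨fun i => if c i = 0 then 1 else ‖c i‖ * ‖M i j‖, fun i => ?_, ?_⟩⟩
  · by_cases hci : c i = 0
    · simp [hci]
    · right
      rw [norm_div, Complex.norm_real, norm_norm, div_self (norm_ne_zero_iff.2 hci)]
  · dsimp only
    split_ifs with hci
    exacts [one_pos, mul_pos (norm_pos_iff.2 hci) (norm_pos_iff.2 (hM0 i j))]
  · calc _ = ∑ i, c i * M i j := Finset.sum_congr rfl fun i _ => ?_
      _ = 0 := by simpa [Matrix.vecMul, dotProduct] using congrFun hcM j
    by_cases hci : c i = 0
    · simp [hci]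
    · have hc' : ((‖c i‖ : ℝ) : ℂ) ≠ 0 := by simpa using hci
      have hM' : ((‖M i j‖ : ℝ) : ℂ) ≠ 0 := by simpa using hM0 i j
      simp only [if_neg hci, ← hMΘ, Complex.real_smul]
      push_cast
      field_simp

theorem exists_vecMul_eq_zero_of_scaling {ι κ : Type*} [Fintype ι] [Nonempty ι]
    {Θ : Matrix ι κ ℂ} (hΘ : ∀ i j, ‖Θ i j‖ = 1) {d : ι → ℂ}
    (hd : ∀ j, (0 : ℂ) ∈ intrinsicInterior ℝ (convexHull ℝ (range fun i => d i * Θ i j))) :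
    ∃ M : Matrix ι κ ℂ, (∀ i j, M i j ≠ 0) ∧
      (∀ i j, M i j / ((‖M i j‖ : ℝ) : ℂ) = Θ i j) ∧ d ᵥ* M = 0 := by
  choose w hw0 hw using fun j => zero_mem_intrinsicInterior_convexHull_range_iff.1 (hd j)
  -- Rows with `d i = 0` do not enter `d ᵥ* M`, so any positive modulus does for them.
  set r : ι → κ → ℝ := fun i j => if d i = 0 then 1 else w j i
  have hr : ∀ i j, 0 < r i j := fun i j => by
    simp only [r]; split_ifs
    exacts [one_pos, hw0 j i]
  refine ⟨Matrix.of fun i j => (r i j : ℂ) * Θ i j, fun i j => ?_, fun i j => ?_, ?_⟩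
  · exact mul_ne_zero (Complex.ofReal_ne_zero.2 (hr i j).ne')
      (norm_ne_zero_iff.1 (by rw [hΘ]; exact one_ne_zero))
  · have : ((r i j : ℝ) : ℂ) ≠ 0 := Complex.ofReal_ne_zero.2 (hr i j).ne'
    simp only [Matrix.of_apply, norm_mul, Complex.norm_real, hΘ, mul_one,
      Real.norm_of_nonneg (hr i j).le]
    field_simp
  · funext j
    rw [Pi.zero_apply, ← hw j]
    refine Finset.sum_congr rfl fun i _ => ?_
    by_cases hdi : d i = 0
    · simp [hdi]
    · simp only [Matrix.of_apply, r, if_neg hdi, Complex.real_smul]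
      ring

theorem phaseRank_lt_iff_exists_scaling_general {n m : ℕ}
    (Θ : Matrix (Fin n) (Fin m) ℂ) (hphase : ∀ i j, ‖Θ i j‖ = 1) :
    phaseRank Θ < n ↔
      ∃ d : Fin n → ℂ, (∀ i, d i = 0 ∨ ‖d i‖ = 1) ∧ (∃ i, d i ≠ 0) ∧
        ∀ j, (0 : ℂ) ∈ intrinsicInterior ℝ
          (convexHull ℝ (Set.range fun i => d i * Θ i j)) := by
  rw [phaseRank_lt_iff hphase]
  constructor
  · rintro ⟨M, hM0, hMΘ, hrank⟩
    obtain ⟨c, hc, hcM⟩ := Matrix.rank_lt_card_height_iff_exists_vecMul_eq_zero.1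
      (by rwa [Fintype.card_fin])
    exact exists_scaling_of_vecMul_eq_zero hM0 hMΘ hc hcM
  · rintro ⟨d, -, ⟨i, hi⟩, hd⟩
    have : Nonempty (Fin n) := ⟨i⟩
    obtain ⟨M, hM0, hMΘ, hdM⟩ := exists_vecMul_eq_zero_of_scaling hphase hd
    refine ⟨M, hM0, hMΘ, ?_⟩
    simpa using Matrix.rank_lt_card_height_iff_exists_vecMul_eq_zero.2
      ⟨d, fun h => hi (congrFun h i), hdM⟩

/-- An `n × m` phase matrix with `m ≥ n` has nonmaximal phase rank iff there is a scaling
of its rows by scalars in `S¹ ∪ {0}`, not all zero, such that no column is colopsided,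
i.e., `0` lies in the relative interior of the convex hull of each scaled column. -/
theorem phaseRank_lt_iff_exists_scaling {n m : ℕ} (hnm : n ≤ m)
    (Θ : Matrix (Fin n) (Fin m) ℂ) (hphase : ∀ i j, ‖Θ i j‖ = 1) :
    phaseRank Θ < n ↔
      ∃ d : Fin n → ℂ, (∀ i, d i = 0 ∨ ‖d i‖ = 1) ∧ (∃ i, d i ≠ 0) ∧
        ∀ j, (0 : ℂ) ∈ intrinsicInterior ℝ
          (convexHull ℝ (Set.range fun i => d i * Θ i j)) :=
  phaseRank_lt_iff_exists_scaling_general Θ hphase
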